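/- arXiv:1012.4683 — 4 statements merged into one kernel-verified Lean document; each statement's English description precedes it below -/
import Mathlib

section
/- For every pair (f₁,f₂) ∈ ℂ[x,y]² satisfying x·∂_x f₁ + x·∂_y f₂ − f₁ = 0, there exists a unique constant c ∈ ℂ such that the pair (f₁, f₂ − c) lies in the image of the map f ↦ (x·∂_y f, −x·∂_x f); hence the first Poisson cohomology space H¹_P of the Poisson bracket {x,y} = x on ℂ[x,y] is isomorphic to ℂ. -/
/-! A cocycle satisfies `f₁ = x·q` with `q = ∂ₓf₁ + ∂_y f₂`, and cancelling `x` in the cocycle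
equation gives `x·∂ₓq + ∂_y f₂ = 0`. Integrating `q` in `y` gives `g₀` with `∂_y g₀ = q`; then
`f₂ + x·∂ₓg₀` has vanishing `∂_y`, so it is a polynomial in `x` alone, equal to `c + x·w(x)` with
`c = f₂(0,0)`, and `g = g₀ - ∫ w dx` solves `d⁰g = (f₁, f₂ - c)`. The constant is unique because
the second component `-x·∂ₓg` of `d⁰g` vanishes at the origin. -/

open MvPolynomial

/-- `ℂ[x,y]`, with `X 0 = x`, `X 1 = y`. -/
abbrev A : Type := MvPolynomial (Fin 2) ℂ

namespace MvPolynomial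

section Integral

variable {σ K : Type*} [Field K]

noncomputable def integral (i : σ) : MvPolynomial σ K →ₗ[K] MvPolynomial σ K :=
  Finsupp.lsum K (fun m => (m i + 1 : K)⁻¹ • monomial (m + Finsupp.single i 1))
    ∘ₗ (AddMonoidAlgebra.coeffLinearEquiv K).toLinearMap

theorem integral_monomial (i : σ) (m : σ →₀ ℕ) (a : K) :
    integral i (monomial m a) = monomial (m + Finsupp.single i 1) ((m i + 1 : K)⁻¹ * a) := by
  rw [← smul_eq_mul, ← smul_monomial]
  exact sum_monomial_eq (by simp)

theorem X_dvd_integral (i : σ) (p : MvPolynomial σ K) : X i ∣ integral i p := by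
  induction p using MvPolynomial.induction_on' with
  | monomial m a =>
    exact ⟨monomial m _, by rw [integral_monomial, X, monomial_mul, one_mul, add_comm]⟩
  | add p q hp hq => exact map_add (integral i) p q ▸ dvd_add hp hq

theorem pderiv_integral_of_ne {i j : σ} (hij : j ≠ i) (p : MvPolynomial σ K) :
    pderiv j (integral i p) = integral i (pderiv j p) := by
  classical
  induction p using MvPolynomial.induction_on' with
  | monomial m a =>
    have hm : m + Finsupp.single i 1 - Finsupp.single j 1 =
        m - Finsupp.single j 1 + Finsupp.single i 1 := by
      ext k
      simp only [Finsupp.coe_add, Finsupp.coe_tsub, Pi.add_apply, Pi.sub_apply, Finsupp.single_apply]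
      split_ifs <;> first | omega | simp_all
    simp [integral_monomial, hij.symm, hm, mul_assoc]
  | add p q hp hq => rw [map_add, map_add, map_add, hp, hq, map_add]

variable [CharZero K]

theorem pderiv_integral (i : σ) (p : MvPolynomial σ K) : pderiv i (integral i p) = p := by
  classical
  induction p using MvPolynomial.induction_on' with
  | monomial m a =>
    have : (m i + 1 : K) ≠ 0 := Nat.cast_add_one_ne_zero (m i)
    simp only [integral_monomial, pderiv_monomial, add_tsub_cancel_right, Finsupp.coe_add,
      Pi.add_apply, Finsupp.single_eq_same, Nat.cast_add, Nat.cast_one]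
    field_simp
  | add p q hp hq => rw [map_add, map_add, hp, hq]

end Integral

theorem pderiv_pderiv_comm {σ R : Type*} [CommRing R] (i j : σ) (p : MvPolynomial σ R) :
    pderiv i (pderiv j p) = pderiv j (pderiv i p) := by
  have : ⁅pderiv i, pderiv j⁆ = (0 : Derivation R (MvPolynomial σ R) (MvPolynomial σ R)) :=
    derivation_ext fun k => by
      rw [Derivation.commutator_apply]
      classical
      simp only [pderiv_X, Pi.single_apply]
      split_ifs <;> simp
  rw [← sub_eq_zero, ← Derivation.commutator_apply, this, Derivation.zero_apply]

theorem eq_C_of_forall_pderiv_eq_zero {σ R : Type*} [CommSemiring R] [IsAddTorsionFree R]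
    {p : MvPolynomial σ R} (h : ∀ i, pderiv i p = 0) : p = C (constantCoeff p) := by
  classical
  ext m
  rw [coeff_C, constantCoeff_eq]
  split_ifs with hm
  · rw [hm]
  obtain ⟨i, hi⟩ : ∃ i, m i ≠ 0 := by simpa [Finsupp.ext_iff] using Ne.symm hm
  have hcoeff := coeff_pderiv (i := i) p (m - Finsupp.single i 1)
  rwa [h i, coeff_zero, Finsupp.sub_add_single_one_cancel hi, eq_comm, mul_comm,
    ← Nat.cast_add_one, ← nsmul_eq_mul, smul_eq_zero, or_iff_right (Nat.succ_ne_zero _)] at hcoeff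

theorem exists_eq_C_add_X_mul {σ K : Type*} [Field K] [CharZero K] {i : σ} {u : MvPolynomial σ K}
    (hu : ∀ j ≠ i, pderiv j u = 0) :
    ∃ w, (∀ j ≠ i, pderiv j w = 0) ∧ u = C (constantCoeff u) + X i * w := by
  have hint : ∀ j ≠ i, pderiv j (integral i (pderiv i u)) = 0 := fun j hj => by
    rw [pderiv_integral_of_ne hj, pderiv_pderiv_comm, hu j hj, map_zero, map_zero]
  obtain ⟨w, hw⟩ := X_dvd_integral i (pderiv i u)
  have hr : u - X i * w = C (constantCoeff u) := by
    rw [eq_C_of_forall_pderiv_eq_zero (p := u - X i * w), map_sub, map_mul, constantCoeff_X,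
      zero_mul, sub_zero]
    intro j
    rw [← hw, map_sub]
    rcases eq_or_ne j i with rfl | hj
    · rw [pderiv_integral, sub_self]
    · rw [hint j hj, hu j hj, sub_zero]
  refine ⟨w, fun j hj => ?_, by rw [← hr, sub_add_cancel]⟩
  have : X i * pderiv j w = 0 := by
    rw [← hint j hj, hw, pderiv_mul, pderiv_X_of_ne hj.symm, zero_mul, zero_add]
  exact (mul_eq_zero.mp this).resolve_left (X_ne_zero i)

end MvPolynomial

theorem exists_pderiv_one_eq_and_X_mul_pderiv_zero_eq {K : Type*} [Field K] [CharZero K]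
    {q f : MvPolynomial (Fin 2) K} (h : X 0 * pderiv 0 q + pderiv 1 f = 0) :
    ∃ g, pderiv 1 g = q ∧ f - C (constantCoeff f) = -(X 0 * pderiv 0 g) := by
  set g₀ := integral 1 q
  have hu : ∀ j ≠ 0, pderiv j (f + X 0 * pderiv 0 g₀) = 0 := fun j hj => by
    rw [Fin.eq_one_of_ne_zero j hj, map_add, pderiv_mul, pderiv_X_of_ne zero_ne_one, zero_mul,
      zero_add, pderiv_pderiv_comm, pderiv_integral, add_comm, h]
  obtain ⟨w, hw, hu_eq⟩ := exists_eq_C_add_X_mul hu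
  have hc : constantCoeff (f + X 0 * pderiv 0 g₀) = constantCoeff f := by
    rw [map_add, map_mul, constantCoeff_X, zero_mul, add_zero]
  refine ⟨g₀ - integral 0 w, ?_, ?_⟩
  · rw [map_sub, pderiv_integral, pderiv_integral_of_ne one_ne_zero, hw 1 one_ne_zero, map_zero,
      sub_zero]
  · rw [map_sub, pderiv_integral, ← hc]
    linear_combination hu_eq

/-- For every cocycle `(f₁,f₂)` of the Poisson complex of `{x,y} = x`
(i.e. `x·∂_x f₁ + x·∂_y f₂ − f₁ = 0`), there is a unique constant `c ∈ ℂ` such that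
`(f₁, f₂ − c)` lies in the image of `d⁰ : f ↦ (x·∂_y f, −x·∂_x f)`; hence `H¹_P ≅ ℂ`
for the bracket `{x,y} = x`. -/
theorem H1_P_eq_C (f₁ f₂ : A) (h : X 0 * pderiv 0 f₁ + X 0 * pderiv 1 f₂ - f₁ = 0) :
    ∃! c : ℂ, ∃ g : A, (f₁, f₂ - C c) = (X 0 * pderiv 1 g, -(X 0 * pderiv 0 g)) := by
  set q := pderiv 0 f₁ + pderiv 1 f₂
  have hf₁ : f₁ = X 0 * q := by linear_combination -h
  have hq : X 0 * pderiv 0 q + pderiv 1 f₂ = 0 := by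
    have hd : pderiv 0 f₁ = q + X 0 * pderiv 0 q := by
      rw [hf₁, pderiv_mul, pderiv_X_self, one_mul]
    refine (mul_eq_zero.mp ?_).resolve_left (X_ne_zero 0)
    linear_combination h - X 0 * hd + hf₁
  obtain ⟨g, hg₁, hg₀⟩ := exists_pderiv_one_eq_and_X_mul_pderiv_zero_eq hq
  refine ⟨constantCoeff f₂, ⟨g, by rw [hg₁, ← hf₁, hg₀]⟩, ?_⟩
  rintro c ⟨g', hg'⟩
  have hc := congrArg (constantCoeff ∘ Prod.snd) hg'
  simp only [Function.comp_apply, map_sub, map_neg, map_mul, constantCoeff_C, constantCoeff_X,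
    zero_mul, neg_zero, sub_eq_zero] at hc
  exact hc.symm
end

section
/- For every pair (f₁,f₂) ∈ ℂ[x,y]² satisfying x²·∂_x f₁ + x·∂_y f₂ − x·f₁ = 0, there exist a polynomial g ∈ ℂ[x,y] and a unique triple consisting of a one-variable polynomial p and constants a₀, a₁ ∈ ℂ such that f₁ = x·∂_y g + p(y) and f₂ = −x²·∂_x g + P(y) + a₀ + a₁·x, where P is the antiderivative of p with zero constant term; hence the first logarithmic Poisson cohomology space H¹_PS of the Poisson bracket {x,y} = x² on ℂ[x,y] is isomorphic to ℂ[y] ⊕ ℂ₁[x]. -/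
open MvPolynomial

/-!
Dividing the cocycle equation by `x` gives `x ∂ₓf₁ + ∂_y f₂ = f₁`, i.e.
`(i - 1) c₁(i,j) + (j + 1) c₂(i,j+1) = 0` for the coefficients of `xⁱyʲ`.
Write `f₁ = x F₁ + f₁(0,y)` and `f₂ = x² F₂ + r₂` with `r₂` of degree `≤ 1` in `x`. For `i ≥ 2` the
relation says that the polynomial 1-form `-F₂ dx + F₁ dy` is closed, so it is `dg` for a polynomial
`g` (Poincaré lemma), and then `(f₁, f₂) - d⁰g = (f₁(0,y), r₂)`. For `i = 0, 1` it says
`f₁(0,y) = ∂_y r₂(0,y)` and that the `x`-coefficient of `r₂` is a constant, which gives `p`, `P`,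
`a₀`, `a₁`. Conversely, a coboundary `(x ∂_y g, -x² ∂ₓ g)` has no `x⁰`-terms in its first entry and
no `1`- or `x`-terms in its second, so `p`, `a₀`, `a₁` are read off `f₁` and `f₂`.
-/

open Finsupp

namespace MvPolynomial

section CommSemiring

variable {σ R : Type*} [CommSemiring R]

theorem _root_.Finsupp.exists_eq_add_single_of_ne_zero {m : σ →₀ ℕ} {i : σ} (hm : m i ≠ 0) :
    ∃ m', m = m' + single i 1 :=
  ⟨m - single i 1, (tsub_add_cancel_of_le (single_le_iff.mpr (Nat.one_le_iff_ne_zero.mpr hm))).symm⟩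

theorem coeff_X_mul_of_eq_zero {m : σ →₀ ℕ} {i : σ} (hm : m i = 0) (p : MvPolynomial σ R) :
    coeff m (X i * p) = 0 := by
  classical
  rw [coeff_X_mul', if_neg (by simpa using hm)]

theorem coeff_X_mul_pderiv (m : σ →₀ ℕ) (i : σ) (p : MvPolynomial σ R) :
    coeff m (X i * pderiv i p) = m i * coeff m p := by
  by_cases hm : m i = 0
  · rw [coeff_X_mul_of_eq_zero hm, hm, Nat.cast_zero, zero_mul]
  · obtain ⟨m, rfl⟩ := exists_eq_add_single_of_ne_zero hm
    rw [add_comm, coeff_X_mul, coeff_pderiv, add_comm (single i 1), Finsupp.add_apply,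
      single_eq_same, Nat.cast_add, Nat.cast_one, mul_comm]

theorem pderiv_modMonomial_single (i : σ) (p : MvPolynomial σ R) :
    pderiv i (p.modMonomial (single i 1)) = 0 := by
  ext m
  rw [coeff_pderiv, coeff_modMonomial_of_le _ (le_add_self), zero_mul, coeff_zero]

end CommSemiring

section Field

variable {σ K : Type*} [Field K]

noncomputable def antideriv (i : σ) : MvPolynomial σ K →ₗ[K] MvPolynomial σ K :=
  (basisMonomials σ K).constr K fun s => monomial (s + single i 1) (s i + 1 : K)⁻¹

theorem antideriv_monomial (i : σ) (s : σ →₀ ℕ) (a : K) :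
    antideriv i (monomial s a) = monomial (s + single i 1) (a / (s i + 1)) := by
  have h := (basisMonomials σ K).constr_basis K
    (fun s => monomial (s + single i 1) (s i + 1 : K)⁻¹) s
  rw [coe_basisMonomials] at h
  have hs : monomial s a = a • monomial s (1 : K) := by rw [smul_monomial, smul_eq_mul, mul_one]
  rw [hs, map_smul, antideriv, h, smul_monomial, smul_eq_mul, div_eq_mul_inv]

theorem coeff_add_single_antideriv (i : σ) (m : σ →₀ ℕ) (p : MvPolynomial σ K) :
    coeff (m + single i 1) (antideriv i p) = coeff m p / (m i + 1) := by
  classical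
  induction p using MvPolynomial.induction_on' with
  | monomial s a =>
    rw [antideriv_monomial, coeff_monomial, coeff_monomial]
    by_cases h : s = m
    · simp [h]
    · rw [if_neg (by simpa using h), if_neg h, zero_div]
  | add p q hp hq => rw [map_add, coeff_add, coeff_add, hp, hq, add_div]

theorem coeff_antideriv_of_eq_zero (i : σ) {m : σ →₀ ℕ} (hm : m i = 0) (p : MvPolynomial σ K) :
    coeff m (antideriv i p) = 0 := by
  classical
  induction p using MvPolynomial.induction_on' with
  | monomial s a =>
    rw [antideriv_monomial, coeff_monomial, if_neg]
    rintro rfl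
    simp at hm
  | add p q hp hq => rw [map_add, coeff_add, hp, hq, add_zero]

theorem pderiv_antideriv_comm {i j : σ} (hij : i ≠ j) (p : MvPolynomial σ K) :
    pderiv j (antideriv i p) = antideriv i (pderiv j p) := by
  ext m
  rw [coeff_pderiv]
  by_cases hm : m i = 0
  · rw [coeff_antideriv_of_eq_zero i hm, coeff_antideriv_of_eq_zero i (by simp [hm, hij]),
      zero_mul]
  · obtain ⟨m, rfl⟩ := exists_eq_add_single_of_ne_zero hm
    rw [add_right_comm, coeff_add_single_antideriv, coeff_add_single_antideriv, coeff_pderiv]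
    simp [hij, hij.symm]
    ring

variable [CharZero K]

theorem pderiv_antideriv (i : σ) (p : MvPolynomial σ K) : pderiv i (antideriv i p) = p := by
  ext m
  rw [coeff_pderiv, coeff_add_single_antideriv, div_mul_cancel₀ _ (Nat.cast_add_one_ne_zero _)]

theorem antideriv_pderiv (i : σ) (p : MvPolynomial σ K) :
    antideriv i (pderiv i p) = p - p.modMonomial (single i 1) := by
  ext m
  rw [coeff_sub]
  by_cases hm : m i = 0
  · rw [coeff_antideriv_of_eq_zero i hm, coeff_modMonomial_of_not_le _ (by simp [hm]), sub_self]
  · obtain ⟨m, rfl⟩ := exists_eq_add_single_of_ne_zero hm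
    rw [coeff_add_single_antideriv, coeff_pderiv, coeff_modMonomial_of_le _ le_add_self,
      sub_zero, mul_div_cancel_right₀ _ (Nat.cast_add_one_ne_zero _)]

/-- Poincaré lemma: a closed polynomial 1-form `u dxᵢ + v dxⱼ` is exact. -/
theorem exists_pderiv_eq_of_pderiv_eq_pderiv {i j : σ} (hij : i ≠ j) {u v : MvPolynomial σ K}
    (h : pderiv j u = pderiv i v) : ∃ g, pderiv i g = u ∧ pderiv j g = v := by
  refine ⟨antideriv i u + antideriv j (v.modMonomial (single i 1)), ?_, ?_⟩
  · rw [map_add, pderiv_antideriv, pderiv_antideriv_comm hij.symm, pderiv_modMonomial_single,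
      map_zero, add_zero]
  · rw [map_add, pderiv_antideriv, pderiv_antideriv_comm hij, h, antideriv_pderiv,
      sub_add_cancel]

end Field

section Axis

variable {σ R : Type*} [CommSemiring R]

theorem _root_.Polynomial.toMvPolynomial_monomial (i : σ) (n : ℕ) (c : R) :
    (Polynomial.monomial n c).toMvPolynomial i = monomial (single i n) c := by
  simp [Polynomial.toMvPolynomial, X_pow_eq_monomial, C_mul_monomial]

theorem _root_.Polynomial.coeff_single_toMvPolynomial (i : σ) (n : ℕ) (p : Polynomial R) :
    coeff (single i n) (p.toMvPolynomial i) = p.coeff n := by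
  classical
  induction p using Polynomial.induction_on' with
  | monomial k c =>
    simp only [Polynomial.toMvPolynomial_monomial, coeff_monomial, Polynomial.coeff_monomial,
      (single_injective i).eq_iff]
  | add p q hp hq => rw [map_add, coeff_add, hp, hq, Polynomial.coeff_add]

theorem _root_.Polynomial.coeff_toMvPolynomial_of_ne {i j : σ} (hij : j ≠ i) {m : σ →₀ ℕ}
    (hm : m j ≠ 0) (p : Polynomial R) : coeff m (p.toMvPolynomial i) = 0 := by
  classical
  induction p using Polynomial.induction_on' with
  | monomial k c =>
    rw [Polynomial.toMvPolynomial_monomial, coeff_monomial, if_neg]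
    rintro rfl
    simp [hij] at hm
  | add p q hp hq => rw [map_add, coeff_add, hp, hq, add_zero]

/-- `p` with every variable other than `X i` set to `0`, as a univariate polynomial. -/
noncomputable def restrictToAxis (i : σ) (p : MvPolynomial σ R) : Polynomial R :=
  ∑ n ∈ Finset.range (p.totalDegree + 1), Polynomial.monomial n (coeff (single i n) p)

theorem coeff_restrictToAxis (i : σ) (p : MvPolynomial σ R) (n : ℕ) :
    (restrictToAxis i p).coeff n = coeff (single i n) p := by
  simp only [restrictToAxis, Polynomial.finsetSum_coeff, Polynomial.coeff_monomial,
    Finset.sum_ite_eq', Finset.mem_range]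
  split_ifs with hn
  · rfl
  · refine (coeff_eq_zero_of_totalDegree_lt ?_).symm
    rw [← degree_apply, degree_single]
    omega

end Axis

section Plane

variable {R : Type*} [CommSemiring R]

theorem _root_.Finsupp.eq_single_zero_add_single_one (m : Fin 2 →₀ ℕ) :
    m = single 0 (m 0) + single 1 (m 1) := by
  ext k
  fin_cases k <;> simp

theorem modMonomial_single_zero_one (f : MvPolynomial (Fin 2) R) :
    f.modMonomial (single 0 1) = (restrictToAxis 1 f).toMvPolynomial 1 := by
  ext m
  by_cases hm : m 0 = 0
  · rw [coeff_modMonomial_of_not_le _ (by simp [hm]), m.eq_single_zero_add_single_one, hm,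
      single_zero, zero_add, Polynomial.coeff_single_toMvPolynomial, coeff_restrictToAxis]
  · rw [coeff_modMonomial_of_le _ (single_le_iff.mpr (Nat.one_le_iff_ne_zero.mpr hm)),
      Polynomial.coeff_toMvPolynomial_of_ne (by decide) hm]

theorem modMonomial_single_zero_two {f : MvPolynomial (Fin 2) R}
    (hf : ∀ n, coeff (single 0 1 + single 1 (n + 1)) f = 0) :
    f.modMonomial (single 0 2) =
      (restrictToAxis 1 f).toMvPolynomial 1 + C (coeff (single 0 1) f) * X 0 := by
  ext m
  rw [coeff_add, coeff_C_mul, coeff_X]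
  by_cases h0 : m 0 = 0
  · rw [coeff_modMonomial_of_not_le _ (by simp [h0]), if_neg (by rintro rfl; simp at h0),
      mul_zero, add_zero, m.eq_single_zero_add_single_one, h0, single_zero, zero_add,
      Polynomial.coeff_single_toMvPolynomial, coeff_restrictToAxis]
  rw [Polynomial.coeff_toMvPolynomial_of_ne (by decide) h0, zero_add]
  by_cases h1 : m = single 0 1
  · subst h1
    rw [coeff_modMonomial_of_not_le _ (by simp), if_pos rfl, mul_one]
  rw [if_neg (Ne.symm h1), mul_zero]
  by_cases h2 : 2 ≤ m 0
  · exact coeff_modMonomial_of_le _ (single_le_iff.mpr h2)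
  obtain ⟨n, hn⟩ : ∃ n, m 1 = n + 1 := by
    refine Nat.exists_eq_succ_of_ne_zero fun h => h1 ?_
    rw [m.eq_single_zero_add_single_one, h, single_zero, add_zero, show m 0 = 1 by omega]
  rw [coeff_modMonomial_of_not_le _ (by simpa using h2), m.eq_single_zero_add_single_one,
    show m 0 = 1 by omega, hn, hf]

end Plane

end MvPolynomial

section Cocycle

variable {K : Type*} [Field K] {f₁ f₂ : MvPolynomial (Fin 2) K}

theorem cocycle_cancel_X (h : X 0 ^ 2 * pderiv 0 f₁ + X 0 * pderiv 1 f₂ - X 0 * f₁ = 0) :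
    X 0 * pderiv 0 f₁ + pderiv 1 f₂ = f₁ := by
  refine sub_eq_zero.mp ((mul_eq_zero.mp ?_).resolve_left (X_ne_zero 0))
  linear_combination h

theorem coeff_of_cocycle (h : X 0 * pderiv 0 f₁ + pderiv 1 f₂ = f₁) (m : Fin 2 →₀ ℕ) :
    (m 0 : K) * coeff m f₁ + coeff (m + single 1 1) f₂ * (m 1 + 1) = coeff m f₁ := by
  simpa only [coeff_add, coeff_X_mul_pderiv, coeff_pderiv] using congr_arg (coeff m) h

theorem pderiv_divMonomial_of_cocycle (h : X 0 * pderiv 0 f₁ + pderiv 1 f₂ = f₁) :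
    pderiv 1 (-f₂.divMonomial (single 0 2)) = pderiv 0 (f₁.divMonomial (single 0 1)) := by
  ext m
  have hm := coeff_of_cocycle h (single 0 2 + m)
  simp only [map_neg, coeff_neg, coeff_pderiv, coeff_divMonomial] at hm ⊢
  rw [← add_assoc, show single (0 : Fin 2) 1 + (m + single 0 1) = single 0 2 + m by
    rw [add_comm m, ← add_assoc, ← single_add]]
  simp only [Finsupp.add_apply, single_eq_same, single_eq_of_ne (by decide : (1 : Fin 2) ≠ 0)] at hm
  push_cast at hm
  linear_combination -hm

theorem derivative_restrictToAxis_of_cocycle (h : X 0 * pderiv 0 f₁ + pderiv 1 f₂ = f₁) :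
    (restrictToAxis 1 f₂).derivative = restrictToAxis 1 f₁ := by
  ext n
  have hn := coeff_of_cocycle h (single 1 n)
  rw [single_eq_of_ne (by decide), single_eq_same, Nat.cast_zero, zero_mul, zero_add,
    ← single_add] at hn
  rw [Polynomial.coeff_derivative, coeff_restrictToAxis, coeff_restrictToAxis, hn]

variable [CharZero K]

theorem coeff_single_zero_one_add_of_cocycle (h : X 0 * pderiv 0 f₁ + pderiv 1 f₂ = f₁) (n : ℕ) :
    coeff (single 0 1 + single 1 (n + 1)) f₂ = 0 := by
  have hn := coeff_of_cocycle h (single 0 1 + single 1 n)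
  simp only [Finsupp.add_apply, single_eq_same, single_eq_of_ne (by decide : (1 : Fin 2) ≠ 0),
    single_eq_of_ne (by decide : (0 : Fin 2) ≠ 1), add_assoc, ← single_add] at hn
  push_cast at hn
  simpa [Nat.cast_add_one_ne_zero] using hn

end Cocycle

section NormalForm

variable {K : Type*} [Field K] {f₁ f₂ : MvPolynomial (Fin 2) K}

/-- `t = (p, a₀, a₁)`, and `(f₁, f₂)` differs from `(p(y), P(y) + a₀ + a₁x)` by the coboundary
`d⁰ g`. -/
def IsNormalForm (f₁ f₂ : MvPolynomial (Fin 2) K) (t : Polynomial K × K × K) : Prop :=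
  ∃ (g : MvPolynomial (Fin 2) K) (P : Polynomial K), P.derivative = t.1 ∧ P.coeff 0 = 0 ∧
    f₁ = X 0 * pderiv 1 g + t.1.toMvPolynomial 1 ∧
    f₂ = -(X 0 ^ 2 * pderiv 0 g) + P.toMvPolynomial 1 + C t.2.1 + C t.2.2 * X 0

theorem IsNormalForm.eq {t : Polynomial K × K × K} (ht : IsNormalForm f₁ f₂ t) :
    t = (restrictToAxis 1 f₁, coeff 0 f₂, coeff (single 0 1) f₂) := by
  obtain ⟨g, P, -, hP0, rfl, rfl⟩ := ht
  obtain ⟨p, a₀, a₁⟩ := t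
  have hX : ∀ q : MvPolynomial (Fin 2) K, X 0 ^ 2 * q = X 0 * (X 0 * q) := fun q => by ring
  refine Prod.ext ?_ (Prod.ext ?_ ?_) <;> dsimp only
  · ext n
    rw [coeff_restrictToAxis, coeff_add, coeff_X_mul_of_eq_zero (by simp), zero_add,
      Polynomial.coeff_single_toMvPolynomial]
  · have hP := Polynomial.coeff_single_toMvPolynomial (1 : Fin 2) 0 P
    rw [single_zero] at hP
    simp [hX, coeff_X_mul_of_eq_zero, hP, hP0]
  · have hXX : coeff (single 0 1) (X 0 * (X 0 * pderiv 0 g)) = 0 := by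
      rw [← add_zero (single (0 : Fin 2) 1), coeff_X_mul, coeff_X_mul_of_eq_zero rfl]
    have hP : coeff (single 0 1) (P.toMvPolynomial (1 : Fin 2)) = 0 :=
      Polynomial.coeff_toMvPolynomial_of_ne (j := 0) (by decide) (by simp) P
    rw [coeff_add, coeff_add, coeff_add, coeff_neg, hX, hXX, hP, coeff_C,
      if_neg (single_ne_zero.mpr one_ne_zero).symm, coeff_C_mul, coeff_X, if_pos rfl]
    ring

theorem isNormalForm_of_cocycle [CharZero K] (h : X 0 * pderiv 0 f₁ + pderiv 1 f₂ = f₁) :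
    IsNormalForm f₁ f₂ (restrictToAxis 1 f₁, coeff 0 f₂, coeff (single 0 1) f₂) := by
  obtain ⟨g, hg₀, hg₁⟩ := exists_pderiv_eq_of_pderiv_eq_pderiv (by decide : (0 : Fin 2) ≠ 1)
    (pderiv_divMonomial_of_cocycle h)
  refine ⟨g, restrictToAxis 1 f₂ - Polynomial.C (coeff 0 f₂), ?_, ?_, ?_, ?_⟩
  · rw [Polynomial.derivative_sub, Polynomial.derivative_C, sub_zero,
      derivative_restrictToAxis_of_cocycle h]
  · rw [Polynomial.coeff_sub, Polynomial.coeff_C_zero, coeff_restrictToAxis, single_zero, sub_self]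
  · rw [hg₁, ← modMonomial_single_zero_one]
    exact (divMonomial_add_modMonomial_single f₁ 0).symm
  · have hf₂ := divMonomial_add_modMonomial f₂ (single 0 2)
    rw [← X_pow_eq_monomial, modMonomial_single_zero_two (coeff_single_zero_one_add_of_cocycle h)] at hf₂
    rw [hg₀, map_sub, Polynomial.toMvPolynomial_C]
    linear_combination -hf₂

end NormalForm

/-- For every cocycle `(f₁,f₂)` of the logarithmic Poisson complex of `{x,y} = x²`
(i.e. `x²·∂_x f₁ + x·∂_y f₂ − x·f₁ = 0`), there exist `g ∈ ℂ[x,y]` and a unique triple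
`(p, a₀, a₁)` — a one-variable polynomial `p` and constants `a₀, a₁ ∈ ℂ` — such that
`f₁ = x·∂_y g + p(y)` and `f₂ = −x²·∂_x g + P(y) + a₀ + a₁·x`, where `P` is the
antiderivative of `p` with zero constant term; hence the first logarithmic Poisson
cohomology `H¹_PS` of `{x,y} = x²` is isomorphic to `ℂ[y] ⊕ ℂ₁[x]`. -/
theorem H1_PS_xsq (f₁ f₂ : A)
    (h : X 0 ^ 2 * pderiv 0 f₁ + X 0 * pderiv 1 f₂ - X 0 * f₁ = 0) :
    ∃! t : Polynomial ℂ × ℂ × ℂ, ∃ (g : A) (P : Polynomial ℂ),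
      P.derivative = t.1 ∧ P.coeff 0 = 0 ∧
      f₁ = X 0 * pderiv 1 g + Polynomial.aeval (X 1 : A) t.1 ∧
      f₂ = -(X 0 ^ 2 * pderiv 0 g) + Polynomial.aeval (X 1 : A) P
            + C t.2.1 + C t.2.2 * X 0 :=
  ⟨_, isNormalForm_of_cocycle (cocycle_cancel_X h), fun _ ht => IsNormalForm.eq ht⟩
end

section
/- For every g ∈ ℂ[x,y] there exists a unique polynomial p in the single variable y such that g − p lies in the image of the ℂ-linear map d¹ : ℂ[x,y]² → ℂ[x,y], d¹(f₁,f₂) = x²·∂_x f₁ + x²·∂_y f₂ − 2x·f₁; hence the second Poisson cohomology space H²_P of the Poisson bracket {x,y} = x² on ℂ[x,y] is isomorphic to ℂ[y]. -/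
/-!
Every term of `d¹(f₁,f₂)` carries a factor `x`, and conversely `x·h` is a coboundary:
writing `h = c(y) + x·h₂`, take `f₁ = -c(y)/2` (so `∂ₓf₁ = 0`) and for `f₂` a
`y`-antiderivative of `h₂`. So the image of `d¹` is the ideal `(x)`, and
`ℂ[x,y] = ℂ[y] ⊕ (x)` via `g ↦ g(0,y)`.
-/

open MvPolynomial

section General

variable {σ R : Type*}

theorem MvPolynomial.X_dvd_sub_aeval_update_zero [CommRing R] [DecidableEq σ]
    (i : σ) (g : MvPolynomial σ R) : X i ∣ g - aeval (Function.update X i 0) g := by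
  induction g using MvPolynomial.induction_on with
  | C a => simp
  | add p q hp hq => simpa [add_sub_add_comm] using dvd_add hp hq
  | mul_X p j hp =>
    by_cases hij : j = i
    · subst hij
      simp
    · simpa [hij, ← sub_mul] using dvd_mul_of_dvd_left hp (X j)

theorem MvPolynomial.pderiv_surjective [Field R] [CharZero R] (i : σ) :
    Function.Surjective (pderiv i : MvPolynomial σ R → MvPolynomial σ R) := by
  classical
  intro h
  induction h using MvPolynomial.induction_on' with
  | monomial m c =>
    refine ⟨monomial (m + Finsupp.single i 1) (c / (m i + 1)), ?_⟩
    have hne : (m i : R) + 1 ≠ 0 := Nat.cast_add_one_ne_zero (m i)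
    rw [pderiv_monomial]
    congr 1
    · simp
    · simp only [Finsupp.add_apply, Finsupp.single_eq_same]
      push_cast
      field_simp
  | add p q hp hq =>
    obtain ⟨f, rfl⟩ := hp
    obtain ⟨f', rfl⟩ := hq
    exact ⟨f + f', map_add _ f f'⟩

theorem MvPolynomial.pderiv_aeval_X_of_ne [CommSemiring R] {i j : σ}
    (h : j ≠ i) (p : Polynomial R) :
    pderiv i (Polynomial.aeval (X j : MvPolynomial σ R) p) = 0 := by
  simp [pderiv_X_of_ne h]

end General

noncomputable def evalXZero : A →ₐ[ℂ] Polynomial ℂ := aeval ![0, Polynomial.X]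

theorem evalXZero_aeval_X_one (p : Polynomial ℂ) :
    evalXZero (Polynomial.aeval (X 1) p) = p := by
  simp [evalXZero, ← Polynomial.aeval_algHom_apply]

theorem evalXZero_X_zero : evalXZero (X 0) = 0 := by
  simp [evalXZero]

theorem aeval_X_one_comp_evalXZero :
    (Polynomial.aeval (X 1 : A)).comp evalXZero = aeval (Function.update X 0 0) := by
  ext i
  fin_cases i <;> simp [evalXZero]

theorem X_zero_dvd_sub_aeval_X_one_iff (g : A) (p : Polynomial ℂ) :
    X 0 ∣ g - Polynomial.aeval (X 1) p ↔ p = evalXZero g := by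
  constructor
  · rintro ⟨q, hq⟩
    have hq' := congrArg evalXZero hq
    rw [map_sub, evalXZero_aeval_X_one, map_mul, evalXZero_X_zero, zero_mul,
      sub_eq_zero] at hq'
    exact hq'.symm
  · rintro rfl
    rw [← AlgHom.comp_apply, aeval_X_one_comp_evalXZero]
    exact X_dvd_sub_aeval_update_zero 0 g

/-- The differential `d¹` of the Poisson complex of `{x,y} = x²`. -/
noncomputable def poissonD1 (f₁ f₂ : A) : A :=
  X 0 ^ 2 * pderiv 0 f₁ + X 0 ^ 2 * pderiv 1 f₂ - 2 * X 0 * f₁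

theorem exists_X_zero_mul_eq_poissonD1 (h : A) :
    ∃ f₁ f₂ : A, X 0 * h = poissonD1 f₁ f₂ := by
  set c : A := Polynomial.aeval (X 1) (evalXZero h)
  obtain ⟨h₂, hh₂⟩ := (X_zero_dvd_sub_aeval_X_one_iff h _).2 rfl
  obtain ⟨f₂, hf₂⟩ := pderiv_surjective (1 : Fin 2) h₂
  refine ⟨C (-2⁻¹) * c, f₂, ?_⟩
  have hc : pderiv 0 (C (-2⁻¹) * c) = 0 := by
    simp [c, pderiv_aeval_X_of_ne (show (1 : Fin 2) ≠ 0 by decide)]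
  have h2 : (2 : A) * C (-2⁻¹) = -1 := by
    rw [← map_ofNat C 2, ← C_mul]; norm_num
  rw [poissonD1, hc, hf₂]
  linear_combination X 0 * hh₂ + X 0 * c * h2

theorem exists_eq_poissonD1_iff (g : A) :
    (∃ f₁ f₂ : A, g = poissonD1 f₁ f₂) ↔ X 0 ∣ g := by
  constructor
  · rintro ⟨f₁, f₂, rfl⟩
    exact ⟨X 0 * pderiv 0 f₁ + X 0 * pderiv 1 f₂ - 2 * f₁, by rw [poissonD1]; ring⟩
  · rintro ⟨h, rfl⟩
    exact exists_X_zero_mul_eq_poissonD1 h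

/-- For every `g ∈ ℂ[x,y]` there is a unique one-variable polynomial `p` such that
`g − p(y)` lies in the image of `d¹(f₁,f₂) = x²·∂_x f₁ + x²·∂_y f₂ − 2x·f₁`, the top
differential of the Poisson complex of `{x,y} = x²`; hence the second Poisson
cohomology `H²_P` of `{x,y} = x²` is isomorphic to `ℂ[y]`. -/
theorem H2_P_xsq_eq_Cy (g : A) :
    ∃! p : Polynomial ℂ, ∃ f₁ f₂ : A,
      g - Polynomial.aeval (X 1 : A) p =
        X 0 ^ 2 * pderiv 0 f₁ + X 0 ^ 2 * pderiv 1 f₂ - 2 * X 0 * f₁ := by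
  simp only [← poissonD1.eq_1, exists_eq_poissonD1_iff, X_zero_dvd_sub_aeval_X_one_iff]
  exact existsUnique_eq
end

section
/- The image of the ℂ[x,y,z]-linear map d² : ℂ[x,y,z]³ → ℂ[x,y,z] given by d²(f₁,f₂,f₃) = x·z·∂_z f₂ + x·y·∂_y f₃ equals the ideal (xy, xz) generated by xy and xz; in particular the image of d² is strictly larger than the image of the Poisson differential δ²(f₁,f₂,f₃) = xyz·(∂_z f₂ + ∂_y f₃), so the third logarithmic Poisson cohomology ℂ[x,y,z]/im(d²) and the third Poisson cohomology ℂ[x,y,z]/im(δ²) of the bracket {y,z} = xyz are quotients by different ideals. -/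
/-!
Every polynomial over a `ℚ`-algebra has an antiderivative in each variable, so `d²` reaches
every `a·xy + b·xz`: take `∂_y f₃ = a` and `∂_z f₂ = b`. Since `δ²(f) = d²(0, y·f₂, z·f₃)`,
`im δ² ⊆ im d²`, and the inclusion is strict because every value of `δ²` is divisible by `z`
while `xy` is not.
-/

open MvPolynomial

/-- `ℂ[x,y,z]`, with `X 0 = x`, `X 1 = y`, `X 2 = z`. -/
abbrev B : Type := MvPolynomial (Fin 3) ℂ

/-- The top differential of the logarithmic Poisson complex of the bracket
`{x,y} = 0`, `{x,z} = 0`, `{y,z} = xyz` along `(xyz)`: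
`d²(f₁,f₂,f₃) = xz·∂_z f₂ + xy·∂_y f₃`. -/
noncomputable def d2log (f : B × B × B) : B :=
  X 0 * X 2 * pderiv 2 f.2.1 + X 0 * X 1 * pderiv 1 f.2.2

/-- The top differential of the Poisson complex of the same bracket:
`δ²(f₁,f₂,f₃) = xyz·(∂_z f₂ + ∂_y f₃)`. -/
noncomputable def delta2 (f : B × B × B) : B :=
  X 0 * X 1 * X 2 * (pderiv 2 f.2.1 + pderiv 1 f.2.2)

namespace MvPolynomial

variable {R σ : Type*} [CommSemiring R] [Algebra ℚ R]

theorem pderiv_surjective_s19 (i : σ) : Function.Surjective (pderiv i : MvPolynomial σ R → _) := by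
  intro p
  induction p using MvPolynomial.induction_on' with
  | monomial s a =>
    refine ⟨monomial (s + Finsupp.single i 1) ((s i + 1 : ℚ)⁻¹ • a), ?_⟩
    have hs : (s i + 1 : ℚ) ≠ 0 := by positivity
    rw [pderiv_monomial, add_tsub_cancel_right, Finsupp.add_apply, Finsupp.single_eq_same,
      smul_mul_assoc, ← map_natCast (algebraMap ℚ R), mul_comm, ← Algebra.smul_def, smul_smul]
    push_cast
    rw [inv_mul_cancel₀ hs, one_smul]
  | add p q hp hq =>
    obtain ⟨F, rfl⟩ := hp
    obtain ⟨G, rfl⟩ := hq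
    exact ⟨F + G, map_add _ _ _⟩

end MvPolynomial

theorem d2log_mem_span (f : B × B × B) :
    d2log f ∈ Ideal.span {(X 0 * X 1 : B), (X 0 * X 2 : B)} :=
  Ideal.mem_span_pair.2 ⟨pderiv 1 f.2.2, pderiv 2 f.2.1, by rw [d2log]; ring⟩

theorem span_subset_range_d2log :
    ((Ideal.span {(X 0 * X 1 : B), (X 0 * X 2 : B)} : Ideal B) : Set B) ⊆ Set.range d2log := by
  intro p hp
  obtain ⟨a, b, rfl⟩ := Ideal.mem_span_pair.1 hp
  obtain ⟨F, rfl⟩ := pderiv_surjective_s19 2 b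
  obtain ⟨G, rfl⟩ := pderiv_surjective_s19 1 a
  exact ⟨(0, F, G), by rw [d2log]; ring⟩

theorem delta2_eq_d2log (f : B × B × B) :
    delta2 f = d2log (0, X 1 * f.2.1, X 2 * f.2.2) := by
  simp only [d2log, delta2, pderiv_mul, pderiv_X_of_ne (by decide : (1 : Fin 3) ≠ 2),
    pderiv_X_of_ne (by decide : (2 : Fin 3) ≠ 1)]
  ring

theorem X_two_dvd_delta2 (f : B × B × B) : X 2 ∣ delta2 f :=
  ⟨X 0 * X 1 * (pderiv 2 f.2.1 + pderiv 1 f.2.2), by rw [delta2]; ring⟩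

theorem not_X_two_dvd_X_zero_mul_X_one : ¬ (X 2 : B) ∣ X 0 * X 1 := by
  simp [X, monomial_mul]

/-- The image of the logarithmic top differential `d²` equals the ideal `(xy, xz)`;
in particular it strictly contains the image of the Poisson top differential `δ²`, so
the third logarithmic Poisson cohomology `ℂ[x,y,z]/im(d²)` and the third Poisson
cohomology `ℂ[x,y,z]/im(δ²)` of the bracket `{y,z} = xyz` are quotients by different
ideals. -/
theorem range_d2log_eq_and_strictly_contains_delta2 :
    Set.range d2log = (Ideal.span {(X 0 * X 1 : B), (X 0 * X 2 : B)} : Ideal B) ∧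
    Set.range delta2 ⊂ Set.range d2log := by
  have hrange : Set.range d2log = (Ideal.span {(X 0 * X 1 : B), (X 0 * X 2 : B)} : Ideal B) :=
    (Set.range_subset_iff.2 d2log_mem_span).antisymm span_subset_range_d2log
  refine ⟨hrange, Set.range_subset_iff.2 fun f ↦ ⟨_, (delta2_eq_d2log f).symm⟩, fun hsub ↦ ?_⟩
  have hxy : (X 0 * X 1 : B) ∈ Set.range d2log := hrange ▸ Ideal.subset_span (by simp)
  obtain ⟨f, hf⟩ := hsub hxy
  exact not_X_two_dvd_X_zero_mul_X_one (hf ▸ X_two_dvd_delta2 f)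
end
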